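/- arXiv:1904.02374 — 3 statements merged into one kernel-verified Lean document; each statement's English description precedes it below -/
import Mathlib

section
/- Let O be a discrete valuation ring with uniformizer ϖ and fraction field E. Let e, D, d be natural numbers with d ≤ D, and let M be an e × D matrix with entries in O such that the rank of M, viewed as a matrix with entries in E, equals D − d. Suppose M has a (D−d) × (D−d) submatrix (obtained by choosing D−d of the rows and D−d of the columns) whose determinant is a unit of O times ϖ^v, i.e. has valuation v. Then the torsion submodule of the quotient Q of O^D by the O-submodule generated by the rows of M is annihilated by ϖ^v; that is, for every q ∈ Q with a·q = 0 for some nonzero a ∈ O, one has ϖ^v·q = 0. (Lemma 4.2 of the paper.) -/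
/-!
Let `δ` be the chosen minor of `M`. If `a • x` lies in the `O`-span of the rows of `M` with
`a ≠ 0`, then over the fraction field `x` lies in the row space of `M`. When `δ ≠ 0` the chosen
rows are independent and as many as the rank, so they span that row space; Cramer's rule on the
chosen columns then writes `δ • x` as a combination of the chosen rows with coefficients taken
from the adjugate, hence in `O`. Finally `ϖ ^ v = u⁻¹ * δ`.
-/

open Submodule

namespace Matrix

variable {ι m n : Type*}

theorem range_row_submatrix_subset {α : Type*} (M : Matrix m n α) (rows : ι → m) :
    Set.range (M.submatrix rows id).row ⊆ Set.range M.row :=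
  Set.range_comp_subset_range rows M.row

theorem comp_vecMul_eq_vecMul_map {R S : Type*} [Fintype m] [CommRing R] [CommRing S]
    (f : R →+* S) (v : m → R) (N : Matrix m n R) :
    f ∘ (v ᵥ* N) = (f ∘ v) ᵥ* N.map f :=
  funext (RingHom.map_vecMul f N v)

theorem det_submatrix_smul_vecMul [Fintype ι] [DecidableEq ι] {R : Type*} [CommRing R]
    (N : Matrix ι n R) (cols : ι → n) (c : ι → R) :
    (N.submatrix id cols).det • (c ᵥ* N) =
      ((c ᵥ* N) ∘ cols ᵥ* (N.submatrix id cols).adjugate) ᵥ* N := by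
  have hcols : (c ᵥ* N) ∘ cols = c ᵥ* N.submatrix id cols := rfl
  rw [hcols, vecMul_vecMul c, mul_adjugate, vecMul_smul, vecMul_one, smul_vecMul]

theorem span_row_submatrix_eq_of_det_ne_zero [Fintype ι] [DecidableEq ι] {K : Type*} [Field K]
    [Fintype n] [Finite m] (M : Matrix m n K) (hrank : M.rank ≤ Fintype.card ι)
    (rows : ι → m) (cols : ι → n) (hdet : (M.submatrix rows cols).det ≠ 0) :
    span K (Set.range (M.submatrix rows id).row) = span K (Set.range M.row) := by
  have hindep : LinearIndependent K (M.submatrix rows id).row :=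
    LinearIndependent.of_comp (LinearMap.funLeft K K cols) <|
      linearIndependent_rows_iff_isUnit.2 <| (isUnit_iff_isUnit_det _).2 hdet.isUnit
  refine eq_of_le_of_finrank_le (span_mono (range_row_submatrix_subset M rows)) ?_
  rw [← rank_eq_finrank_span_row, finrank_span_eq_card hindep]
  exact hrank

theorem algebraMap_comp_mem_span_row_of_smul_mem {O K : Type*} [CommRing O] [IsDomain O]
    [Field K] [Algebra O K] [IsFractionRing O K] (M : Matrix m n O) {a : O} (ha : a ≠ 0)
    {x : n → O} (hx : a • x ∈ span O (Set.range M.row)) :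
    algebraMap O K ∘ x ∈ span K (Set.range (M.map (algebraMap O K)).row) := by
  set φ : (n → O) →ₗ[O] (n → K) := LinearMap.compLeft (Algebra.linearMap O K) n
  have hspan : (span O (Set.range M.row)).map φ ≤
      (span K (Set.range (M.map (algebraMap O K)).row)).restrictScalars O := by
    rw [map_span, ← Set.range_comp]
    exact span_le_restrictScalars O K _
  have hax : algebraMap O K a • (algebraMap O K ∘ x) ∈
      span K (Set.range (M.map (algebraMap O K)).row) := by
    have := hspan (mem_map_of_mem hx)
    rw [map_smul, ← algebraMap_smul K] at this
    exact this
  have ha' : algebraMap O K a ≠ 0 := (map_ne_zero_iff _ (IsFractionRing.injective O K)).2 ha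
  simpa only [inv_smul_smul₀ ha'] using smul_mem _ (algebraMap O K a)⁻¹ hax

theorem det_submatrix_smul_mem_span_row_of_smul_mem [Fintype ι] [DecidableEq ι] {O K : Type*}
    [CommRing O] [IsDomain O] [Field K] [Algebra O K] [IsFractionRing O K] [Fintype n] [Finite m]
    (M : Matrix m n O) (hrank : (M.map (algebraMap O K)).rank ≤ Fintype.card ι)
    (rows : ι → m) (cols : ι → n) {a : O} (ha : a ≠ 0) {x : n → O}
    (hx : a • x ∈ span O (Set.range M.row)) :
    (M.submatrix rows cols).det • x ∈ span O (Set.range M.row) := by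
  set f := algebraMap O K
  set N := M.submatrix rows id
  set A := M.submatrix rows cols
  by_cases hA : A.det = 0
  · simp [hA]
  have hf : Function.Injective f := IsFractionRing.injective O K
  have hdetK : (A.map f).det = f A.det := (f.map_det A).symm
  have hAK : (A.map f).det ≠ 0 := hdetK ▸ (map_ne_zero_iff f hf).2 hA
  obtain ⟨c, hc⟩ : f ∘ x ∈ LinearMap.range (N.map f).vecMulLinear := by
    rw [range_vecMulLinear, show N.map f = (M.map f).submatrix rows id from rfl,
      span_row_submatrix_eq_of_det_ne_zero _ hrank rows cols hAK]
    exact algebraMap_comp_mem_span_row_of_smul_mem M ha hx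
  rw [vecMulLinear_apply] at hc
  have hcramer : A.det • x = ((x ∘ cols) ᵥ* A.adjugate) ᵥ* N := by
    apply hf.comp_left
    change f ∘ (A.det • x) = f ∘ (((x ∘ cols) ᵥ* A.adjugate) ᵥ* N)
    rw [comp_vecMul_eq_vecMul_map, comp_vecMul_eq_vecMul_map,
      show A.adjugate.map f = (A.map f).adjugate from f.map_adjugate A]
    have := det_submatrix_smul_vecMul (N.map f) cols c
    rw [hc, show (N.map f).submatrix id cols = A.map f from rfl] at this
    rw [← Function.comp_assoc, ← this, hdetK]
    ext k
    simp
  rw [hcramer]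
  exact span_mono (range_row_submatrix_subset M rows) (range_vecMulLinear N ▸ ⟨_, rfl⟩)

end Matrix

theorem torsion_of_quotient_annihilated_by_minor_valuation_general
    (O : Type*) [CommRing O] [IsDomain O]
    (ϖ : O)
    (e D d v : ℕ)
    (M : Matrix (Fin e) (Fin D) O)
    (hrank : (M.map (algebraMap O (FractionRing O))).rank = D - d)
    (rows : Fin (D - d) → Fin e) (cols : Fin (D - d) → Fin D)
    (u : Oˣ) (hdet : (M.submatrix rows cols).det = (u : O) * ϖ ^ v) :
    ∀ q : (Fin D → O) ⧸ Submodule.span O (Set.range fun i => M i),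
      (∃ a : O, a ≠ 0 ∧ a • q = 0) → ϖ ^ v • q = 0 := by
  rintro q ⟨a, ha, haq⟩
  obtain ⟨x, rfl⟩ := Submodule.Quotient.mk_surjective _ q
  rw [← Submodule.Quotient.mk_smul, Submodule.Quotient.mk_eq_zero] at haq ⊢
  have hδx := Matrix.det_submatrix_smul_mem_span_row_of_smul_mem M
    (hrank.trans (Fintype.card_fin _).symm).le rows cols ha haq
  rw [show ϖ ^ v = ↑u⁻¹ * (M.submatrix rows cols).det by rw [hdet, Units.inv_mul_cancel_left],
    mul_smul]
  exact smul_mem _ _ hδx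

/-- **Lemma 4.2.** Let `O` be a discrete valuation ring with uniformizer `ϖ` and fraction
field `E`.  Let `M` be an `e × D` matrix with entries in `O` whose rank over `E` is `D - d`
(with `d ≤ D`).  If `M` has a `(D-d) × (D-d)` submatrix whose determinant has valuation `v`
(i.e. is a unit times `ϖ ^ v`), then the torsion submodule of the quotient `Q` of `O ^ D`
by the submodule generated by the rows of `M` is annihilated by `ϖ ^ v`. -/
theorem torsion_of_quotient_annihilated_by_minor_valuation
    (O : Type*) [CommRing O] [IsDomain O] [IsDiscreteValuationRing O]
    (ϖ : O) (hϖ : Irreducible ϖ)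
    (e D d v : ℕ) (hdD : d ≤ D)
    (M : Matrix (Fin e) (Fin D) O)
    (hrank : (M.map (algebraMap O (FractionRing O))).rank = D - d)
    (rows : Fin (D - d) → Fin e) (cols : Fin (D - d) → Fin D)
    (hrows : Function.Injective rows) (hcols : Function.Injective cols)
    (u : Oˣ) (hdet : (M.submatrix rows cols).det = (u : O) * ϖ ^ v) :
    ∀ q : (Fin D → O) ⧸ Submodule.span O (Set.range fun i => M i),
      (∃ a : O, a ≠ 0 ∧ a • q = 0) → ϖ ^ v • q = 0 :=
  torsion_of_quotient_annihilated_by_minor_valuation_general O ϖ e D d v M hrank rows cols u hdet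
end

section
/- Let p be a prime, Γ a group, and W a finite abelian group killed by p, equipped with a Γ-action making it a simple (irreducible) F_p[Γ]-module; let k_W = End_{F_p[Γ]}(W) be the ring of Γ-equivariant endomorphisms of W (a finite field). Let Δ be a normal subgroup of Γ acting trivially on W, and assume that every 1-cocycle Γ → W that vanishes identically on Δ is a 1-coboundary (this is the condition H^1(Γ/Δ, W) = 0). Let ψ_1, …, ψ_s : Γ → W be 1-cocycles whose cohomology classes are linearly independent over k_W, i.e. whenever a_1, …, a_s ∈ k_W are such that g ↦ Σ_i a_i(ψ_i(g)) is a 1-coboundary, then a_1 = ⋯ = a_s = 0. Then the map Δ → W^s sending δ to (ψ_1(δ), …, ψ_s(δ)) is a surjective group homomorphism. (This is the group-theoretic content of Lemma 5.4 of the paper: the fixed fields K_{ψ_1}, …, K_{ψ_s} of the cocycles are strongly linearly disjoint over K, with Gal(K_{ψ_i}/K) ≅ W via ψ_i.) -/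
/-!
On `Δ` the cocycles `ψᵢ` are homomorphisms, and `ψᵢ(g δ g⁻¹) = g • ψᵢ(δ)`, so the image `V` of `Δ`
in `W^s` is a `Γ`-stable subgroup. If `V ≠ W^s`, semisimplicity of `W^s` yields a nonzero
`Γ`-equivariant `π : W^s → W` killing `V`. Writing `π = Σ aᵢ ∘ prᵢ`, the cocycle `Σ aᵢ ∘ ψᵢ`
vanishes on `Δ`, so it is a coboundary by `H¹(Γ/Δ, W) = 0`; independence then forces all `aᵢ = 0`,
i.e. `π = 0`.
-/

open groupCohomology

section Semisimple

variable {R M : Type*} [Ring R] [AddCommGroup M] [Module R M]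

theorem IsSemisimpleModule.of_forall_eq_bot_or_eq_top
    (h : ∀ N : Submodule R M, N = ⊥ ∨ N = ⊤) : IsSemisimpleModule R M where
  exists_isCompl N := (h N).elim (fun hN => ⟨⊤, hN ▸ isCompl_bot_top⟩)
    (fun hN => ⟨⊥, hN ▸ isCompl_top_bot⟩)

theorem IsSemisimpleModule.exists_ker_eq [IsSemisimpleModule R M] (V : Submodule R M) :
    ∃ f : M →ₗ[R] M, LinearMap.ker f = V := by
  obtain ⟨C, hC⟩ := exists_isCompl V
  refine ⟨C.subtype ∘ₗ C.projectionOnto V hC.symm, ?_⟩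
  rw [LinearMap.ker_comp_of_ker_eq_bot _ C.ker_subtype, Submodule.ker_projectionOnto]

theorem IsSemisimpleModule.exists_pi_ne_zero_le_ker {ι W : Type*} [Finite ι] [AddCommGroup W]
    [Module R W] [IsSemisimpleModule R W] {V : Submodule R (ι → W)} (hV : V ≠ ⊤) :
    ∃ π : (ι → W) →ₗ[R] W, π ≠ 0 ∧ V ≤ LinearMap.ker π := by
  obtain ⟨f, rfl⟩ := exists_ker_eq V
  obtain ⟨v, hv⟩ : ∃ v, f v ≠ 0 := by
    by_contra! hf
    exact hV (LinearMap.ker_eq_top.mpr (LinearMap.ext hf))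
  obtain ⟨i, hi⟩ := Function.ne_iff.mp hv
  refine ⟨LinearMap.proj i ∘ₗ f, fun h => hi (LinearMap.congr_fun h v), fun u hu => ?_⟩
  rw [LinearMap.mem_ker, LinearMap.comp_apply, LinearMap.mem_ker.mp hu, map_zero]

end Semisimple

def AddSubgroup.toSubmoduleClosure {A M : Type*} [Ring A] [AddCommGroup M] [Module A M]
    {S : Set A} (U : AddSubgroup M) (hU : ∀ a ∈ S, ∀ m ∈ U, a • m ∈ U) :
    Submodule (Subring.closure S) M :=
  have smul_mem : ∀ a ∈ Subring.closure S, ∀ m ∈ U, a • m ∈ U := fun a ha => by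
    induction ha using Subring.closure_induction with
    | mem a ha => exact hU a ha
    | zero => exact fun m _ => (zero_smul A m).symm ▸ U.zero_mem
    | one => exact fun m hm => (one_smul A m).symm ▸ hm
    | add a b _ _ iha ihb =>
      exact fun m hm => (add_smul a b m).symm ▸ U.add_mem (iha m hm) (ihb m hm)
    | neg a _ iha => exact fun m hm => (neg_smul a m).symm ▸ U.neg_mem (iha m hm)
    | mul a b _ _ iha ihb => exact fun m hm => (mul_smul a b m).symm ▸ iha _ (ihb m hm)
  { U with smul_mem' := fun a m hm => smul_mem a a.2 m hm }

section Equivariant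

variable {Γ W : Type*} [Group Γ] [AddCommGroup W] [DistribMulAction Γ W]

-- Modules over this subring of `AddMonoid.End W` are `Γ`-modules, and their submodules are
-- exactly the `Γ`-stable subgroups.
local notation "𝓡" => Subring.closure (Set.range (DistribMulAction.toAddMonoidEnd Γ W))

theorem exists_equivariant_pi_ne_zero_le_ker
    (hsimple : ∀ U : AddSubgroup W, (∀ g : Γ, ∀ w ∈ U, g • w ∈ U) → U = ⊥ ∨ U = ⊤)
    {ι : Type*} [Finite ι] (V : AddSubgroup (ι → W)) (hV : ∀ g : Γ, ∀ v ∈ V, g • v ∈ V)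
    (hV_ne_top : V ≠ ⊤) :
    ∃ π : (ι → W) →+ W, π ≠ 0 ∧ (∀ (g : Γ) v, π (g • v) = g • π v) ∧ ∀ v ∈ V, π v = 0 := by
  have : IsSemisimpleModule 𝓡 W := .of_forall_eq_bot_or_eq_top fun N => by
    simpa only [← Submodule.toAddSubgroup_inj, Submodule.bot_toAddSubgroup,
      Submodule.top_toAddSubgroup] using
      hsimple N.toAddSubgroup fun g w hw => N.smul_mem ⟨_, Subring.subset_closure ⟨g, rfl⟩⟩ hw
  obtain ⟨π, hπ, hVπ⟩ := IsSemisimpleModule.exists_pi_ne_zero_le_ker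
    (V := V.toSubmoduleClosure (S := Set.range (DistribMulAction.toAddMonoidEnd Γ W))
      (by rintro _ ⟨g, rfl⟩ v hv; exact hV g v hv))
    (by rwa [Ne, ← Submodule.toAddSubgroup_inj])
  exact ⟨π.toAddMonoidHom, fun h => hπ (LinearMap.toAddMonoidHom_injective h),
    fun g v => π.map_smul ⟨_, Subring.subset_closure ⟨g, rfl⟩⟩ v, fun _ hv => hVπ hv⟩

end Equivariant

namespace groupCohomology.IsCocycle₁

variable {Γ A : Type*} [Group Γ] [AddCommGroup A] [MulAction Γ A] {f : Γ → A}

theorem map_mul_of_smul_eq (hf : IsCocycle₁ f) {δ : Γ} (hδ : ∀ a : A, δ • a = a) (g : Γ) :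
    f (δ * g) = f δ + f g := by
  rw [hf, hδ, add_comm]

theorem map_inv_of_smul_eq (hf : IsCocycle₁ f) {δ : Γ} (hδ : ∀ a : A, δ • a = a) :
    f δ⁻¹ = -f δ := by
  rw [← map_inv_of_isCocycle₁ hf, hδ]

theorem map_conj_of_smul_eq (hf : IsCocycle₁ f) {δ : Γ} (hδ : ∀ a : A, δ • a = a) (g : Γ) :
    f (g * δ * g⁻¹) = g • f δ := by
  rw [hf, hf, mul_smul, hδ, map_inv_of_isCocycle₁ hf]
  abel

def imageSubgroup (hf : IsCocycle₁ f) (Δ : Subgroup Γ) (htriv : ∀ δ ∈ Δ, ∀ a : A, δ • a = a) :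
    AddSubgroup A where
  carrier := f '' Δ
  zero_mem' := ⟨1, Δ.one_mem, map_one_of_isCocycle₁ hf⟩
  add_mem' := by
    rintro _ _ ⟨δ₁, h₁, rfl⟩ ⟨δ₂, h₂, rfl⟩
    exact ⟨δ₁ * δ₂, Δ.mul_mem h₁ h₂, hf.map_mul_of_smul_eq (htriv δ₁ h₁) δ₂⟩
  neg_mem' := by
    rintro _ ⟨δ, hδ, rfl⟩
    exact ⟨δ⁻¹, Δ.inv_mem hδ, hf.map_inv_of_smul_eq (htriv δ hδ)⟩

theorem smul_mem_imageSubgroup (hf : IsCocycle₁ f) {Δ : Subgroup Γ} (hΔ : Δ.Normal)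
    (htriv : ∀ δ ∈ Δ, ∀ a : A, δ • a = a) (g : Γ) {a : A} (ha : a ∈ hf.imageSubgroup Δ htriv) :
    g • a ∈ hf.imageSubgroup Δ htriv := by
  obtain ⟨δ, hδ, rfl⟩ := ha
  exact ⟨g * δ * g⁻¹, hΔ.conj_mem δ hδ g, hf.map_conj_of_smul_eq (htriv δ hδ) g⟩

end groupCohomology.IsCocycle₁

theorem cocycles_surjective_on_kernel_general
    (Γ : Type*) [Group Γ]
    (W : Type*) [AddCommGroup W] [DistribMulAction Γ W]
    (hsimple : ∀ U : AddSubgroup W, (∀ (g : Γ), ∀ w ∈ U, g • w ∈ U) → U = ⊥ ∨ U = ⊤)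
    (Δ : Subgroup Γ) (hΔ : Δ.Normal)
    (htriv : ∀ δ ∈ Δ, ∀ w : W, δ • w = w)
    (hH1 : ∀ f : Γ → W, (∀ g h : Γ, f (g * h) = f g + g • f h) →
      (∀ δ ∈ Δ, f δ = 0) → ∃ w : W, ∀ g : Γ, f g = g • w - w)
    (s : ℕ) (ψ : Fin s → Γ → W)
    (hcoc : ∀ i, ∀ g h : Γ, ψ i (g * h) = ψ i g + g • ψ i h)
    (hindep : ∀ a : Fin s → (W →+ W),
      (∀ i, ∀ (g : Γ) (w : W), a i (g • w) = g • a i w) →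
      (∃ w : W, ∀ g : Γ, (∑ i, a i (ψ i g)) = g • w - w) →
      ∀ i, a i = 0) :
    (∀ δ₁ ∈ Δ, ∀ δ₂ ∈ Δ, ∀ i, ψ i (δ₁ * δ₂) = ψ i δ₁ + ψ i δ₂) ∧
    (∀ w : Fin s → W, ∃ δ ∈ Δ, ∀ i, ψ i δ = w i) := by
  refine ⟨fun δ₁ h₁ δ₂ _ i => by rw [hcoc, htriv δ₁ h₁], ?_⟩
  set Ψ : Γ → Fin s → W := fun g i => ψ i g
  have hΨ : IsCocycle₁ Ψ := fun g h => funext fun i => (hcoc i g h).trans (add_comm _ _)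
  have htrivΨ : ∀ δ ∈ Δ, ∀ v : Fin s → W, δ • v = v := fun δ hδ v =>
    funext fun i => htriv δ hδ (v i)
  set V := hΨ.imageSubgroup Δ htrivΨ
  suffices hV : V = ⊤ by
    intro w
    obtain ⟨δ, hδ, hδw⟩ := (hV ▸ AddSubgroup.mem_top w : w ∈ V)
    exact ⟨δ, hδ, congrFun hδw⟩
  by_contra hV
  obtain ⟨π, hπ, hπΓ, hπV⟩ := exists_equivariant_pi_ne_zero_le_ker hsimple V
    (fun g _ => hΨ.smul_mem_imageSubgroup hΔ htrivΨ g) hV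
  have hπ_sum (v : Fin s → W) : π v = ∑ i, π (Pi.single i (v i)) := by
    conv_lhs => rw [← Finset.univ_sum_single v]
    exact map_sum π _ _
  obtain ⟨w, hw⟩ := hH1 (fun g => π (Ψ g))
    (fun g h => by rw [hΨ, map_add, hπΓ, add_comm])
    (fun δ hδ => hπV _ ⟨δ, hδ, rfl⟩)
  have ha := hindep (fun i => π.comp (AddMonoidHom.single (fun _ => W) i))
    (fun i g w => by
      change π (Pi.single i (g • w)) = g • π (Pi.single i w)
      rw [Pi.single_smul', hπΓ])
    ⟨w, fun g => by rw [← hw g, hπ_sum]; rfl⟩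
  exact hπ (AddMonoidHom.functions_ext _ _ _ fun i x => DFunLike.congr_fun (ha i) x)

/-- **Lemma 5.4 (group-theoretic content).**  Let `p` be a prime, `Γ` a group, and `W` a finite
abelian group killed by `p`, with a `Γ`-action making it a simple `𝔽_p[Γ]`-module.  Let
`Δ ⊴ Γ` be a normal subgroup acting trivially on `W` such that every 1-cocycle `Γ → W`
vanishing identically on `Δ` is a 1-coboundary (i.e. `H¹(Γ/Δ, W) = 0`).  If `ψ₁, …, ψ_s` are
1-cocycles whose classes are linearly independent over `k_W = End_{𝔽_p[Γ]}(W)`, then the map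
`Δ → W^s`, `δ ↦ (ψ₁(δ), …, ψ_s(δ))`, is a surjective group homomorphism. -/
theorem cocycles_surjective_on_kernel
    (p : ℕ) (hp : p.Prime)
    (Γ : Type*) [Group Γ]
    (W : Type*) [AddCommGroup W] [Finite W] [DistribMulAction Γ W]
    (hWp : ∀ w : W, p • w = 0)
    (hW0 : Nontrivial W)
    (hsimple : ∀ U : AddSubgroup W, (∀ (g : Γ), ∀ w ∈ U, g • w ∈ U) → U = ⊥ ∨ U = ⊤)
    (Δ : Subgroup Γ) (hΔ : Δ.Normal)
    (htriv : ∀ δ ∈ Δ, ∀ w : W, δ • w = w)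
    (hH1 : ∀ f : Γ → W, (∀ g h : Γ, f (g * h) = f g + g • f h) →
      (∀ δ ∈ Δ, f δ = 0) → ∃ w : W, ∀ g : Γ, f g = g • w - w)
    (s : ℕ) (ψ : Fin s → Γ → W)
    (hcoc : ∀ i, ∀ g h : Γ, ψ i (g * h) = ψ i g + g • ψ i h)
    (hindep : ∀ a : Fin s → (W →+ W),
      (∀ i, ∀ (g : Γ) (w : W), a i (g • w) = g • a i w) →
      (∃ w : W, ∀ g : Γ, (∑ i, a i (ψ i g)) = g • w - w) →
      ∀ i, a i = 0) :
    (∀ δ₁ ∈ Δ, ∀ δ₂ ∈ Δ, ∀ i, ψ i (δ₁ * δ₂) = ψ i δ₁ + ψ i δ₂) ∧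
    (∀ w : Fin s → W, ∃ δ ∈ Δ, ∀ i, ψ i δ = w i) :=
  cocycles_surjective_on_kernel_general Γ W hsimple Δ hΔ htriv hH1 s ψ hcoc hindep
end

section
/- Let O be a discrete valuation ring with uniformizer ϖ, G a group, and M a free O-module equipped with an O-linear G-action. Assume: (i) the fixed module (M/ϖM)^G is zero; and (ii) there exists an integer n ≥ 0 such that for every m ≥ 1, ϖ^n annihilates H^1(G, M/ϖ^m M), i.e. for every 1-cocycle z : G → M/ϖ^m M the cocycle ϖ^n·z is a 1-coboundary. Then for every m ≥ 1 and every N ≥ m + n, the map H^1(G, M/ϖ^N M) → H^1(G, M/ϖ^m M) induced by the reduction M/ϖ^N M → M/ϖ^m M is the zero map: every 1-cocycle G → M/ϖ^N M becomes a 1-coboundary after reduction modulo ϖ^m. (This is the formal content of Corollary B.2 of the paper, whose continuous-cohomology hypotheses (i) and (ii) are supplied by Lazard's results.) -/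
/-!
Since `(M/ϖM)^G = 0` and `ϖ` is a non-zero-divisor on `M`, induction on `k` shows that an
element of `M` fixed by `G` modulo `ϖ^k` lies in `ϖ^k M`. Now let `z` be a cocycle modulo `ϖ^N`.
By (ii), `ϖ^n z ≡ (g ↦ g w - w)` modulo `ϖ^N`, so `w` is fixed modulo `ϖ^n`, hence `w = ϖ^n w'`;
cancelling `ϖ^n` gives `z ≡ (g ↦ g w' - w')` modulo `ϖ^(N-n)`, and `N - n ≥ m`.
-/

/-- A function `z : G → M` represents a 1-cocycle of `G` with values in `M/ϖ^m M`:
the cocycle identity holds modulo `ϖ^m M`. -/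
def IsCocycleMod {O G M : Type*} [CommRing O] [Group G] [AddCommGroup M] [Module O M]
    [DistribMulAction G M] (ϖ : O) (m : ℕ) (z : G → M) : Prop :=
  ∀ g h : G, ∃ v : M, z (g * h) - (z g + g • z h) = ϖ ^ m • v

/-- A function `z : G → M` represents a 1-coboundary of `G` with values in `M/ϖ^m M`:
there is `w ∈ M` with `z g ≡ g • w - w` modulo `ϖ^m M` for all `g`. -/
def IsCoboundaryMod {O G M : Type*} [CommRing O] [Group G] [AddCommGroup M] [Module O M]
    [DistribMulAction G M] (ϖ : O) (m : ℕ) (z : G → M) : Prop :=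
  ∃ w : M, ∀ g : G, ∃ v : M, z g - (g • w - w) = ϖ ^ m • v

section

variable {O G M : Type*} [CommRing O] [Group G] [AddCommGroup M] [Module O M]
  [DistribMulAction G M] {ϖ : O}

theorem IsCoboundaryMod.mono {k m : ℕ} {z : G → M} (hkm : k ≤ m)
    (h : IsCoboundaryMod ϖ m z) : IsCoboundaryMod ϖ k z := by
  obtain ⟨w, hw⟩ := h
  refine ⟨w, fun g => ?_⟩
  obtain ⟨v, hv⟩ := hw g
  exact ⟨ϖ ^ (m - k) • v, by rw [hv, smul_smul, ← pow_add, Nat.add_sub_cancel' hkm]⟩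

variable [SMulCommClass G O M]

theorem exists_eq_pow_smul_of_forall_smul_sub_eq_pow_smul (hreg : IsSMulRegular M ϖ)
    (hfix : ∀ x : M, (∀ g : G, ∃ v : M, g • x - x = ϖ • v) → ∃ v : M, x = ϖ • v) :
    ∀ (k : ℕ) (x : M), (∀ g : G, ∃ v : M, g • x - x = ϖ ^ k • v) → ∃ y : M, x = ϖ ^ k • y
  | 0, x, _ => ⟨x, by rw [pow_zero, one_smul]⟩
  | k + 1, x, hx => by
    obtain ⟨y, rfl⟩ := hfix x fun g => by
      obtain ⟨v, hv⟩ := hx g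
      exact ⟨ϖ ^ k • v, by rw [hv, pow_succ', mul_smul]⟩
    have hy : ∀ g : G, ∃ v : M, g • y - y = ϖ ^ k • v := fun g => by
      obtain ⟨v, hv⟩ := hx g
      refine ⟨v, hreg ?_⟩
      show ϖ • (g • y - y) = ϖ • (ϖ ^ k • v)
      rw [smul_sub, ← smul_comm g ϖ y, hv, pow_succ', mul_smul]
    obtain ⟨y', rfl⟩ := exists_eq_pow_smul_of_forall_smul_sub_eq_pow_smul hreg hfix k y hy
    exact ⟨y', by rw [smul_smul, ← pow_succ']⟩

theorem IsCoboundaryMod.of_pow_smul {n k : ℕ} {z : G → M} (hreg : IsSMulRegular M ϖ)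
    (hdiv : ∀ x : M, (∀ g : G, ∃ v : M, g • x - x = ϖ ^ n • v) → ∃ y : M, x = ϖ ^ n • y)
    (h : IsCoboundaryMod ϖ (n + k) fun g => ϖ ^ n • z g) : IsCoboundaryMod ϖ k z := by
  obtain ⟨w, hw⟩ := h
  have hw_fixed : ∀ g : G, ∃ v : M, g • w - w = ϖ ^ n • v := fun g => by
    obtain ⟨v, hv⟩ := hw g
    exact ⟨z g - ϖ ^ k • v, by rw [smul_sub, smul_smul, ← pow_add, ← hv]; abel⟩
  obtain ⟨w', rfl⟩ := hdiv w hw_fixed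
  refine ⟨w', fun g => ?_⟩
  obtain ⟨v, hv⟩ := hw g
  refine ⟨v, hreg.pow n ?_⟩
  show ϖ ^ n • (z g - (g • w' - w')) = ϖ ^ n • (ϖ ^ k • v)
  rw [smul_smul, ← pow_add, ← hv, smul_sub, smul_sub, smul_comm g (ϖ ^ n) w']

end

theorem reduction_of_cocycle_is_coboundary_general
    (O : Type*) [CommRing O] [IsDomain O]
    (ϖ : O) (hϖ : Irreducible ϖ)
    (G : Type*) [Group G]
    (M : Type*) [AddCommGroup M] [Module O M] [Module.Free O M]
    [DistribMulAction G M] [SMulCommClass G O M]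
    (n : ℕ)
    (hfix : ∀ x : M, (∀ g : G, ∃ v : M, g • x - x = ϖ • v) → ∃ v : M, x = ϖ • v)
    (hann : ∀ m : ℕ, 1 ≤ m → ∀ z : G → M, IsCocycleMod ϖ m z →
      IsCoboundaryMod ϖ m (fun g => ϖ ^ n • z g)) :
    ∀ m : ℕ, 1 ≤ m → ∀ N : ℕ, m + n ≤ N → ∀ z : G → M, IsCocycleMod ϖ N z →
      IsCoboundaryMod ϖ m z := by
  intro m hm N hN z hz
  have hreg : IsSMulRegular M ϖ := .of_ne_zero hϖ.ne_zero
  have hcob : IsCoboundaryMod ϖ (n + (N - n)) fun g => ϖ ^ n • z g := by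
    rw [Nat.add_sub_cancel' (by omega)]
    exact hann N (by omega) z hz
  exact (hcob.of_pow_smul hreg
    (exists_eq_pow_smul_of_forall_smul_sub_eq_pow_smul hreg hfix n)).mono (by omega)

/-- **Corollary B.2 (formal content).**  Let `O` be a discrete valuation ring with uniformizer
`ϖ`, `G` a group and `M` a free `O`-module with an `O`-linear `G`-action.  Assume
(i) `(M/ϖM)^G = 0`, and (ii) there is `n ≥ 0` such that `ϖ^n` annihilates `H¹(G, M/ϖ^m M)`
for every `m ≥ 1`.  Then for every `m ≥ 1` and every `N ≥ m + n`, the reduction map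
`H¹(G, M/ϖ^N M) → H¹(G, M/ϖ^m M)` is zero: every 1-cocycle with values in `M/ϖ^N M`
becomes a 1-coboundary after reduction modulo `ϖ^m`. -/
theorem reduction_of_cocycle_is_coboundary
    (O : Type*) [CommRing O] [IsDomain O] [IsDiscreteValuationRing O]
    (ϖ : O) (hϖ : Irreducible ϖ)
    (G : Type*) [Group G]
    (M : Type*) [AddCommGroup M] [Module O M] [Module.Free O M]
    [DistribMulAction G M] [SMulCommClass G O M]
    (n : ℕ)
    (hfix : ∀ x : M, (∀ g : G, ∃ v : M, g • x - x = ϖ • v) → ∃ v : M, x = ϖ • v)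
    (hann : ∀ m : ℕ, 1 ≤ m → ∀ z : G → M, IsCocycleMod ϖ m z →
      IsCoboundaryMod ϖ m (fun g => ϖ ^ n • z g)) :
    ∀ m : ℕ, 1 ≤ m → ∀ N : ℕ, m + n ≤ N → ∀ z : G → M, IsCocycleMod ϖ N z →
      IsCoboundaryMod ϖ m z :=
  reduction_of_cocycle_is_coboundary_general O ϖ hϖ G M n hfix hann
end
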